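/- arXiv:2408.00308 — 2 statements merged into one kernel-verified Lean document; each statement's English description precedes it below -/
import Mathlib

section
/- If a string S is not branching in T (i.e., S is not the longest common prefix of two distinct suffixes of T), then the net frequency of S in T is zero. -/
variable {α : Type*} [DecidableEq α] [Fintype α]

/-- Number of occurrences of `S` as a substring of `T`. -/
def occ (T S : List α) : ℕ :=
  ((Finset.range T.length).filter (fun i => S <+: T.drop i)).card

/-- `S` is branching in `T`: `S` is the longest common prefix of two distinct suffixes of `T`. -/
def Branching (T S : List α) : Prop :=
  ∃ i j, i < j ∧ j < T.length ∧ S <+: T.drop i ∧ S <+: T.drop j ∧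
    ∀ P : List α, P <+: T.drop i → P <+: T.drop j → P.length ≤ S.length

/-- Net frequency: zero for unique strings; for repeated strings, the number of pairs
`(x, y)` with `f(xS) = f(Sy) = f(xSy) = 1`. -/
def netFreq (T S : List α) : ℕ :=
  if 2 ≤ occ T S then
    (Finset.univ.filter (fun p : α × α =>
      occ T (p.1 :: S) = 1 ∧ occ T (S ++ [p.2]) = 1 ∧
        occ T (p.1 :: (S ++ [p.2])) = 1)).card
  else 0

/-- In a text with a unique sentinel character appended, if a string `S` is not branching,
then its net frequency is zero. -/
theorem netFreq_eq_zero_of_not_branching (T₀ : List α) (s : α) (hs : s ∉ T₀)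
    (S : List α) (hnb : ¬ Branching (T₀ ++ [s]) S) :
    netFreq (T₀ ++ [s]) S = 0 := by
  set T := T₀ ++ [s] with hT
  unfold netFreq
  split_ifs with h2
  · rw [Finset.card_eq_zero]
    unfold Branching at hnb
    push_neg at hnb
    -- pairwise common extension
    have ext : ∀ a b, a < b → b < T.length → S <+: T.drop a → S <+: T.drop b →
        ∃ c, (S ++ [c]) <+: T.drop a ∧ (S ++ [c]) <+: T.drop b := by
      intro a b hab hb ha' hb'
      obtain ⟨P, hPa, hPb, hlen⟩ := hnb a b hab hb ha' hb'
      have hSP : S <+: P := List.prefix_of_prefix_length_le ha' hPa hlen.le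
      obtain ⟨rest, rfl⟩ := hSP
      cases rest with
      | nil => simp at hlen
      | cons c rest' =>
        refine ⟨c, ?_, ?_⟩
        · exact List.IsPrefix.trans ⟨rest', by simp⟩ hPa
        · exact List.IsPrefix.trans ⟨rest', by simp⟩ hPb
    -- uniqueness of the next character at a given occurrence
    have uniq : ∀ (k : ℕ) (c d : α), (S ++ [c]) <+: T.drop k → (S ++ [d]) <+: T.drop k →
        c = d := by
      intro k c d hc hd
      have h1 : (S ++ [c]) <+: (S ++ [d]) :=
        List.prefix_of_prefix_length_le hc hd (by simp)
      have h2 := h1.eq_of_length (by simp)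
      simpa using h2
    -- extract two occurrences
    rw [occ] at h2
    obtain ⟨i, hi, j, hj, hij⟩ := Finset.one_lt_card.mp h2
    simp only [Finset.mem_filter, Finset.mem_range] at hi hj
    obtain ⟨i, j, hij, hjlen, hiS, hjS⟩ :
        ∃ i j, i < j ∧ j < T.length ∧ S <+: T.drop i ∧ S <+: T.drop j := by
      rcases hij.lt_or_gt with h | h
      · exact ⟨i, j, h, hj.1, hi.2, hj.2⟩
      · exact ⟨j, i, h, hi.1, hj.2, hi.2⟩
    obtain ⟨c₀, hc₀i, hc₀j⟩ := ext i j hij hjlen hiS hjS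
    -- every occurrence is followed by c₀
    have H : ∀ k, k < T.length → S <+: T.drop k → (S ++ [c₀]) <+: T.drop k := by
      intro k hk hkS
      rcases lt_trichotomy k i with h | h | h
      · obtain ⟨c, hck, hci⟩ := ext k i h (lt_trans hij hjlen) hkS hiS
        rwa [uniq i c c₀ hci hc₀i] at hck
      · rwa [h]
      · obtain ⟨c, hci, hck⟩ := ext i k h hk hiS hkS
        rwa [uniq i c c₀ hci hc₀i] at hck
    -- now the filter is empty
    rw [Finset.eq_empty_iff_forall_notMem]
    rintro ⟨x, y⟩ hp
    simp only [Finset.mem_filter, Finset.mem_univ, true_and] at hp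
    obtain ⟨-, hy, -⟩ := hp
    by_cases hyc : y = c₀
    · subst hyc
      have heq : occ T (S ++ [y]) = occ T S := by
        unfold occ
        congr 1
        apply Finset.filter_congr
        intro k hk
        simp only [Finset.mem_range] at hk
        constructor
        · intro h; exact ((List.prefix_append S [y]).trans h)
        · intro h; exact H k hk h
      rw [heq, occ] at hy
      omega
    · have : occ T (S ++ [y]) = 0 := by
        unfold occ
        rw [Finset.card_eq_zero, Finset.eq_empty_iff_forall_notMem]
        intro k hk
        simp only [Finset.mem_filter, Finset.mem_range] at hk
        obtain ⟨hklen, hkpre⟩ := hk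
        have hkS : S <+: T.drop k := (List.prefix_append S [y]).trans hkpre
        exact hyc (uniq k y c₀ hkpre (H k hklen hkS))
      omega
  · rfl
end

section
/- For an occurrence (i,j) in text T with 1 < i and j < n: if f(T[i-1..j]) = 1 and f(T[i..j+1]) = 1, then f(T[i-1..j+1]) = 1. -/
/-! Every occurrence of `T[i-1..j+1]` starts an occurrence of its prefix `T[i-1..j]`, so there is
at most one, and the one at (1-indexed) position `i - 1` exists. -/

variable {α : Type*} [DecidableEq α]

/-- The (1-indexed) substring `T[a..b]`. -/
def substr (T : List α) (a b : ℕ) : List α :=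
  (T.drop (a - 1)).take (b - a + 1)

theorem substr_prefix_drop {α : Type*} (T : List α) (a b : ℕ) :
    substr T a b <+: T.drop (a - 1) :=
  List.take_prefix _ _

theorem substr_prefix_substr_succ {α : Type*} (T : List α) (a b : ℕ) :
    substr T a b <+: substr T a (b + 1) :=
  List.take_prefix_take_left (by omega)

theorem occ_le_occ_of_prefix {T L M : List α} (h : L <+: M) : occ T M ≤ occ T L :=
  Finset.card_le_card fun _ hp => by
    rw [Finset.mem_filter] at hp ⊢
    exact ⟨hp.1, h.trans hp.2⟩

theorem occ_pos_of_prefix_drop {T S : List α} {p : ℕ} (hp : p < T.length)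
    (h : S <+: T.drop p) : 0 < occ T S :=
  Finset.card_pos.mpr ⟨p, Finset.mem_filter.mpr ⟨Finset.mem_range.mpr hp, h⟩⟩

theorem bidirectional_extension_unique_general (T : List α) (i j : ℕ)
    (hij : i ≤ j) (hj : j < T.length)
    (hleft : occ T (substr T (i - 1) j) = 1) :
    occ T (substr T (i - 1) (j + 1)) = 1 := by
  have hle : occ T (substr T (i - 1) (j + 1)) ≤ 1 :=
    (occ_le_occ_of_prefix (substr_prefix_substr_succ T (i - 1) j)).trans hleft.le
  have hpos : 0 < occ T (substr T (i - 1) (j + 1)) :=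
    occ_pos_of_prefix_drop (by omega) (substr_prefix_drop T (i - 1) (j + 1))
  omega

/-- For an occurrence `(i, j)` with `1 < i` and `j < n`: if `f(T[i-1..j]) = 1` and
`f(T[i..j+1]) = 1`, then `f(T[i-1..j+1]) = 1`. -/
theorem bidirectional_extension_unique (T : List α) (i j : ℕ)
    (hi : 1 < i) (hij : i ≤ j) (hj : j < T.length)
    (hleft : occ T (substr T (i - 1) j) = 1)
    (hright : occ T (substr T i (j + 1)) = 1) :
    occ T (substr T (i - 1) (j + 1)) = 1 :=
  bidirectional_extension_unique_general T i j hij hj hleft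
end
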